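/- Let n ≥ 1 and let p(t) = ∑_{k=1}^n [a_k cos(kt+θ_k) + b_k sin(kt+θ_k)] be a real trigonometric polynomial with real coefficients a_k, b_k, θ_k, not all of the a_k, b_k being zero. Then for every interval [α,β] with β − α ≤ 2π and every δ > 0, (1/(2δ)) ∫_α^β |p'(t)| 1_{{|p(t)| < δ}} dt ≤ 6n. -/

import Mathlib

/-!
On a subinterval where `p'` has no zero, `p` is injective by Rolle's theorem, so the change of
variables `y = p t` bounds `∫ |p'| 1_{|p| < δ}` over it by the length `2δ` of `(-δ, δ)`.
The derivative `p'` is again a nonzero trigonometric polynomial of degree `n`, and `2 e^{int} p'(t)`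
is a complex polynomial of degree `≤ 2n` evaluated at `e^{it}`. Since `t ↦ e^{it}` is injective
on an interval of length `≤ 2π`, `p'` has at most `2n` zeros there, which cut `[α, β]` into at
most `2n + 1 ≤ 3n` pieces.
-/

open MeasureTheory Real Set Polynomial ComplexConjugate

section CrossingIntegral

variable {p q : ℝ → ℝ}

lemma injOn_of_hasDerivAt_ne_zero {u v : ℝ} (hpq : ∀ t, HasDerivAt p (q t) t)
    (hq : ∀ t ∈ Ioo u v, q t ≠ 0) : InjOn p (Ioo u v) := by
  have hp : Continuous p := continuous_iff_continuousAt.2 fun t => (hpq t).continuousAt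
  have key : ∀ x ∈ Ioo u v, ∀ y ∈ Ioo u v, x < y → p x ≠ p y := by
    intro x hx y hy hxy hpxy
    obtain ⟨c, hc, hqc⟩ := exists_hasDerivAt_eq_zero hxy hp.continuousOn hpxy fun t _ => hpq t
    exact hq c ⟨hx.1.trans hc.1, hc.2.trans hy.2⟩ hqc
  intro x hx y hy hpxy
  rcases lt_trichotomy x y with h | h | h
  · exact absurd hpxy (key x hx y hy h)
  · exact h
  · exact absurd hpxy.symm (key y hy x hx h)

lemma intervalIntegrable_ite_abs_lt (hp : Continuous p) (hq : Continuous q) (δ u v : ℝ) :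
    IntervalIntegrable (fun t => if |p t| < δ then |q t| else 0) volume u v := by
  refine (hq.abs.intervalIntegrable u v).mono_fun ?_ (Filter.Eventually.of_forall fun t => ?_)
  · exact (Measurable.ite (isOpen_lt hp.abs continuous_const).measurableSet
      hq.abs.measurable measurable_const).aestronglyMeasurable
  · dsimp only
    split_ifs <;> simp

lemma integral_ite_abs_lt_le_of_deriv_ne_zero {δ u v : ℝ} (hpq : ∀ t, HasDerivAt p (q t) t)
    (hδ : 0 ≤ δ) (huv : u ≤ v) (hq : ∀ t ∈ Ioo u v, q t ≠ 0) :
    (∫ t in u..v, if |p t| < δ then |q t| else 0) ≤ 2 * δ := by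
  have hcov := integral_image_eq_integral_abs_deriv_smul measurableSet_Ioo
    (fun t _ => (hpq t).hasDerivWithinAt) (injOn_of_hasDerivAt_ne_zero hpq hq)
    ((Ioo (-δ) δ).indicator (1 : ℝ → ℝ))
  calc (∫ t in u..v, if |p t| < δ then |q t| else 0)
      = ∫ t in Ioo u v, |q t| • (Ioo (-δ) δ).indicator 1 (p t) := by
        rw [intervalIntegral.integral_of_le huv, integral_Ioc_eq_integral_Ioo]
        congr 1 with t
        by_cases h : |p t| < δ
        · rw [if_pos h, indicator_of_mem (show p t ∈ Ioo (-δ) δ from abs_lt.1 h), Pi.one_apply,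
            smul_eq_mul, mul_one]
        · rw [if_neg h, indicator_of_notMem (show p t ∉ Ioo (-δ) δ from mt abs_lt.2 h),
            smul_zero]
    _ = ∫ y in p '' Ioo u v, (Ioo (-δ) δ).indicator 1 y := hcov.symm
    _ ≤ ∫ y, (Ioo (-δ) δ).indicator (1 : ℝ → ℝ) y :=
        setIntegral_le_integral ((integrable_indicator_iff measurableSet_Ioo).2
          (integrableOn_const measure_Ioo_lt_top.ne)) (Filter.Eventually.of_forall fun y =>
            indicator_nonneg (fun _ _ => zero_le_one) y)
    _ = 2 * δ := by
        rw [integral_indicator_one measurableSet_Ioo, Real.volume_real_Ioo_of_le (by linarith)]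
        ring

lemma integral_ite_abs_lt_le_of_zeros_subset {δ u v : ℝ} (hpq : ∀ t, HasDerivAt p (q t) t)
    (hq : Continuous q) (hδ : 0 ≤ δ) (s : Finset ℝ) (huv : u ≤ v)
    (hs : ∀ t ∈ Ioo u v, q t = 0 → t ∈ s) :
    (∫ t in u..v, if |p t| < δ then |q t| else 0) ≤ (s.card + 1) * (2 * δ) := by
  have hp : Continuous p := continuous_iff_continuousAt.2 fun t => (hpq t).continuousAt
  induction s using Finset.induction_on_max generalizing u v with
  | empty =>
    simpa using integral_ite_abs_lt_le_of_deriv_ne_zero hpq hδ huv fun t ht h =>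
      Finset.notMem_empty t (hs t ht h)
  | insert z s hlt ih =>
    have hz : z ∉ s := fun h => (hlt z h).false
    rw [Finset.card_insert_of_notMem hz, Nat.cast_succ]
    by_cases hzuv : z ∈ Ioo u v
    · have hleft := ih hzuv.1.le fun t ht htq => by
        rcases Finset.mem_insert.1 (hs t ⟨ht.1, ht.2.trans hzuv.2⟩ htq) with rfl | h
        · exact absurd ht.2 (lt_irrefl t)
        · exact h
      have hright := integral_ite_abs_lt_le_of_deriv_ne_zero hpq hδ hzuv.2.le fun t ht htq => by
        rcases Finset.mem_insert.1 (hs t ⟨hzuv.1.trans ht.1, ht.2⟩ htq) with rfl | h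
        · exact lt_irrefl t ht.1
        · exact (hlt t h).not_gt ht.1
      rw [← intervalIntegral.integral_add_adjacent_intervals
        (intervalIntegrable_ite_abs_lt hp hq δ u z) (intervalIntegrable_ite_abs_lt hp hq δ z v)]
      linarith
    · have := ih huv fun t ht htq => by
        rcases Finset.mem_insert.1 (hs t ht htq) with rfl | h
        · exact absurd ht hzuv
        · exact h
      linarith

end CrossingIntegral

open Complex in
theorem Polynomial.exists_finset_card_le_natDegree_of_eval_exp_mul_I_eq_zero {P : Polynomial ℂ}
    (hP : P ≠ 0) {α β : ℝ} (hαβ : β - α ≤ 2 * π) :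
    ∃ s : Finset ℝ, s.card ≤ P.natDegree ∧
      ∀ t ∈ Ioc α β, P.eval (exp (t * I)) = 0 → t ∈ s := by
  set Z := {t ∈ Ioc α β | P.eval (exp (t * I)) = 0}
  have hmaps : MapsTo (fun t : ℝ => exp (t * I)) Z (P.rootSet ℂ) := fun t ht =>
    (mem_rootSet_of_ne hP).2 (by simpa [aeval_def] using ht.2)
  have hinj : InjOn (fun t : ℝ => exp (t * I)) Z := by
    intro x hx y hy hxy
    refine Circle.exp_injOn_Ioc hαβ hx.1 hy.1 (Subtype.ext ?_)
    simpa only [Circle.coe_exp] using hxy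
  have hZ : Z.Finite := Finite.of_injOn hmaps hinj (P.rootSet_finite ℂ)
  refine ⟨hZ.toFinset, ?_, fun t ht h => hZ.mem_toFinset.2 ⟨ht, h⟩⟩
  calc hZ.toFinset.card = Z.ncard := (ncard_eq_toFinset_card Z hZ).symm
    _ ≤ (P.rootSet ℂ).ncard := ncard_le_ncard_of_injOn _ hmaps hinj (P.rootSet_finite ℂ)
    _ ≤ P.natDegree := P.ncard_rootSet_le ℂ

noncomputable section

def trigPoly (n : ℕ) (a b θ : ℕ → ℝ) (t : ℝ) : ℝ :=
  ∑ k ∈ Finset.Icc 1 n, (a k * cos (k * t + θ k) + b k * sin (k * t + θ k))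

namespace trigPoly

variable (n : ℕ) (a b θ : ℕ → ℝ)

theorem hasDerivAt (t : ℝ) :
    HasDerivAt (trigPoly n a b θ)
      (trigPoly n (fun k => k * b k) (fun k => -(k * a k)) θ t) t := by
  refine HasDerivAt.fun_sum fun k _ => ?_
  have hlin : HasDerivAt (fun t : ℝ => (k : ℝ) * t + θ k) k t := by
    simpa using ((hasDerivAt_id t).const_mul (k : ℝ)).add_const (θ k)
  convert (hlin.cos.const_mul (a k)).fun_add (hlin.sin.const_mul (b k)) using 1
  ring

theorem continuous : Continuous (trigPoly n a b θ) :=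
  continuous_iff_continuousAt.2 fun t => (hasDerivAt n a b θ t).continuousAt

section Companion

open Complex

/-- `a cos x + b sin x = Re ((a - b i) e^{ix})`. -/
def phasor (k : ℕ) : ℂ := (a k - b k * I) * exp (θ k * I)

def companion : ℂ[X] :=
  ∑ k ∈ Finset.Icc 1 n,
    (C (phasor a b θ k) * X ^ (n + k) + C (conj (phasor a b θ k)) * X ^ (n - k))

theorem eval_companion (t : ℝ) :
    (companion n a b θ).eval (exp (t * I)) = 2 * exp (t * I) ^ n * trigPoly n a b θ t := by
  set z := exp (t * I)
  have hz : z ≠ 0 := exp_ne_zero _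
  have hconj : conj z = z⁻¹ := by rw [← Complex.exp_conj, ← Complex.exp_neg]; simp
  have hterm : ∀ k, phasor a b θ k * z ^ k + conj (phasor a b θ k * z ^ k)
      = 2 * (a k * Real.cos (k * t + θ k) + b k * Real.sin (k * t + θ k) : ℝ) := by
    intro k
    have : phasor a b θ k * z ^ k = (a k - b k * I) * exp ((k * t + θ k : ℝ) * I) := by
      rw [phasor, mul_assoc, ← Complex.exp_nat_mul, ← Complex.exp_add]
      congr 2
      push_cast
      ring
    rw [add_conj, this, Complex.mul_re, Complex.exp_ofReal_mul_I_re, Complex.exp_ofReal_mul_I_im]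
    simp
  simp only [companion, eval_finsetSum, eval_add, eval_mul, eval_C, eval_pow, eval_X, trigPoly,
    ofReal_sum, Finset.mul_sum]
  refine Finset.sum_congr rfl fun k hk => ?_
  have := hterm k
  rw [map_mul, map_pow, hconj] at this
  rw [pow_add, pow_sub₀ z hz (Finset.mem_Icc.1 hk).2]
  linear_combination z ^ n * this

theorem natDegree_companion_le : (companion n a b θ).natDegree ≤ 2 * n := by
  refine natDegree_sum_le_of_forall_le _ _ fun k hk => ?_
  have hkn := (Finset.mem_Icc.1 hk).2
  refine (natDegree_add_le _ _).trans (max_le ?_ ?_) <;>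
    exact (natDegree_C_mul_X_pow_le _ _).trans (by omega)

theorem coeff_companion_add {k : ℕ} (hk : k ∈ Finset.Icc 1 n) :
    (companion n a b θ).coeff (n + k) = phasor a b θ k := by
  rw [companion, finsetSum_coeff, Finset.sum_eq_single_of_mem k hk]
  · have : n + k ≠ n - k := by grind
    simp [coeff_X_pow, this]
  · intro j hj hjk
    have h2 : n + k ≠ n - j := by grind
    simp [coeff_X_pow, h2, Ne.symm hjk]

theorem phasor_ne_zero {k : ℕ} (h : a k ≠ 0 ∨ b k ≠ 0) : phasor a b θ k ≠ 0 := by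
  refine mul_ne_zero (fun h0 => ?_) (Complex.exp_ne_zero _)
  have hre := congrArg Complex.re h0
  have him := congrArg Complex.im h0
  simp at hre him
  tauto

theorem companion_ne_zero (hnz : ∃ k ∈ Finset.Icc 1 n, a k ≠ 0 ∨ b k ≠ 0) :
    companion n a b θ ≠ 0 := by
  obtain ⟨k, hk, hab⟩ := hnz
  intro h0
  apply phasor_ne_zero a b θ hab
  rw [← coeff_companion_add n a b θ hk, h0, coeff_zero]

theorem exists_finset_card_le_of_eq_zero (hnz : ∃ k ∈ Finset.Icc 1 n, a k ≠ 0 ∨ b k ≠ 0)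
    {α β : ℝ} (hαβ : β - α ≤ 2 * π) :
    ∃ s : Finset ℝ, s.card ≤ 2 * n ∧
      ∀ t ∈ Ioc α β, trigPoly n a b θ t = 0 → t ∈ s := by
  obtain ⟨s, hcard, hs⟩ :=
    exists_finset_card_le_natDegree_of_eval_exp_mul_I_eq_zero (companion_ne_zero n a b θ hnz) hαβ
  refine ⟨s, hcard.trans (natDegree_companion_le n a b θ), fun t ht h0 => hs t ht ?_⟩
  rw [eval_companion, h0, Complex.ofReal_zero, mul_zero]

end Companion

end trigPoly

end

theorem statement19
    (n : ℕ) (hn : 1 ≤ n) (a b θ : ℕ → ℝ)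
    (hnz : ∃ k ∈ Finset.Icc 1 n, a k ≠ 0 ∨ b k ≠ 0)
    (α β : ℝ) (hαβ : α ≤ β) (hlen : β - α ≤ 2 * π) (δ : ℝ) (hδ : 0 < δ) :
    (∫ t in α..β,
        if |∑ k ∈ Finset.Icc 1 n, (a k * Real.cos (k * t + θ k) + b k * Real.sin (k * t + θ k))|
            < δ then
          |∑ k ∈ Finset.Icc 1 n,
            (k : ℝ) * (-(a k) * Real.sin (k * t + θ k) + b k * Real.cos (k * t + θ k))|
        else 0) / (2 * δ)
      ≤ 6 * n := by
  set b' : ℕ → ℝ := fun k => k * b k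
  set a' : ℕ → ℝ := fun k => -(k * a k)
  have hq : ∀ t, (∑ k ∈ Finset.Icc 1 n,
      (k : ℝ) * (-(a k) * Real.sin (k * t + θ k) + b k * Real.cos (k * t + θ k)))
      = trigPoly n b' a' θ t := fun t => Finset.sum_congr rfl fun k _ => by ring
  have hnz' : ∃ k ∈ Finset.Icc 1 n, b' k ≠ 0 ∨ a' k ≠ 0 := by
    obtain ⟨k, hk, hab⟩ := hnz
    have hk0 : (k : ℝ) ≠ 0 := Nat.cast_ne_zero.2 (by grind)
    exact ⟨k, hk, by simp only [b', a', neg_ne_zero, mul_ne_zero_iff]; tauto⟩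
  obtain ⟨s, hcard, hs⟩ := trigPoly.exists_finset_card_le_of_eq_zero n b' a' θ hnz' hlen
  have hbound := integral_ite_abs_lt_le_of_zeros_subset (trigPoly.hasDerivAt n a b θ)
    (trigPoly.continuous n b' a' θ) hδ.le s hαβ fun t ht => hs t (Ioo_subset_Ioc_self ht)
  simp only [hq]
  rw [div_le_iff₀ (by positivity)]
  refine hbound.trans ?_
  have : (s.card : ℝ) ≤ 2 * n := by exact_mod_cast hcard
  have : (1 : ℝ) ≤ n := by exact_mod_cast hn
  nlinarith
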